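/- Let Y be a simplicial complex, X ⊂ Y a subcomplex, and B a set of simplices of Y such that: (i) a simplex of Y lies in X iff none of its faces lie in B; (ii) if σ, σ' ∈ B and σ ∪ σ' is a simplex of Y then σ ∪ σ' ∈ B. Suppose f: D^k → Y is simplicial for a combinatorial triangulation, f(∂D^k) ⊂ X, and σ is a simplex of D^k of maximal dimension with f(σ) ∈ B. Then σ does not lie in ∂D^k, and for every simplex τ in Link_{D^k}(σ), the image f(τ) lies in L(f(σ), B). -/
import Mathlib


/-! Shared simplicial-complex framework. -/

/-- The model `m`-sphere, for an integer `m`; it is empty when `m < 0`,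
and is the unit sphere in `ℝ^{m+1}` when `m ≥ 0`. -/
def sphereSpace (m : ℤ) : Type :=
  {x : EuclideanSpace ℝ (Fin (m + 1).toNat) // ‖x‖ = 1 ∧ 0 ≤ m}

noncomputable instance (m : ℤ) : TopologicalSpace (sphereSpace m) := by
  unfold sphereSpace; infer_instance

/-- The model `m`-disc: empty for `m < 0`, a point for `m = 0`,
the closed unit ball in `ℝ^m` for `m ≥ 0`. -/
def discSpace (m : ℤ) : Type :=
  {x : EuclideanSpace ℝ (Fin m.toNat) // ‖x‖ ≤ 1 ∧ 0 ≤ m}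

noncomputable instance (m : ℤ) : TopologicalSpace (discSpace m) := by
  unfold discSpace; infer_instance

/-- The inclusion of the model `m`-sphere as the boundary of the model `(m+1)`-disc. -/
noncomputable local instance (priority := low) (α : Type*) : DecidableEq α :=
  fun _ _ => Classical.propDecidable _

def sphereToDisc (m : ℤ) (x : sphereSpace m) : discSpace (m + 1) :=
  ⟨x.1, le_of_eq x.2.1, by have := x.2.2; omega⟩

/-- An abstract simplicial complex on a vertex set `V`: a collection of nonempty
finite subsets of `V` closed under passing to nonempty subsets. -/
def IsComplex {V : Type*} (K : Set (Finset V)) : Prop :=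
  ∀ σ ∈ K, σ ≠ ∅ ∧ ∀ τ ⊆ σ, τ ≠ ∅ → τ ∈ K

/-- The link of a simplex `σ` in `K`. -/
def link {V : Type*} (K : Set (Finset V)) (σ : Finset V) : Set (Finset V) :=
  {τ | τ ∈ K ∧ Disjoint σ τ ∧ σ ∪ τ ∈ K}

/-- The geometric realization of `K`: formal convex combinations of vertices
supported on a simplex of `K`. -/
def spc {V : Type*} (K : Set (Finset V)) : Type _ :=
  {w : V →₀ ℝ // w.support ∈ K ∧ (∀ v, 0 ≤ w v) ∧ (w.sum fun _ c => c) = 1}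

instance {V : Type*} (K : Set (Finset V)) : TopologicalSpace (spc K) :=
  TopologicalSpace.induced (fun w => ((w.1 : V →₀ ℝ) : V → ℝ)) inferInstance

/-- A simplicial map from `K` to `X`, given on vertices by `f`. -/
def IsSimplicial {V U : Type*} (K : Set (Finset V)) (X : Set (Finset U)) (f : V → U) : Prop :=
  ∀ σ ∈ K, σ.image f ∈ X

/-- `f` is locally injective on `K`: it preserves dimensions of simplices. -/
def LocInj {V U : Type*} (K : Set (Finset V)) (f : V → U) : Prop :=
  ∀ σ ∈ K, (σ.image f).card = σ.card

/-- `K` is a combinatorial triangulation of the `m`-sphere. -/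
def IsCombTriSphere {V : Type*} (m : ℤ) (K : Set (Finset V)) : Prop :=
  IsComplex K ∧ Nonempty (spc K ≃ₜ sphereSpace m) ∧
    ∀ σ ∈ K, Nonempty (spc (link K σ) ≃ₜ sphereSpace (m - σ.card))

/-- `K` is a combinatorial triangulation of the `m`-disc. -/
def IsCombTriDisc {V : Type*} (m : ℤ) (K : Set (Finset V)) : Prop :=
  IsComplex K ∧ Nonempty (spc K ≃ₜ discSpace m) ∧
    ∀ σ ∈ K, Nonempty (spc (link K σ) ≃ₜ sphereSpace (m - σ.card)) ∨
      Nonempty (spc (link K σ) ≃ₜ discSpace (m - σ.card))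

/-- The boundary of a combinatorial triangulation of the `m`-disc:
the simplices whose link is not a sphere of the complementary dimension. -/
def discBoundary {V : Type*} (m : ℤ) (K : Set (Finset V)) : Set (Finset V) :=
  {σ ∈ K | ¬ Nonempty (spc (link K σ) ≃ₜ sphereSpace (m - σ.card))}

/-- The locally injective simplicial map `f` from a triangulated `m`-sphere `K` to `X`
extends to a locally injective simplicial map on a combinatorial triangulation of the
`(m+1)`-disc whose boundary is `K`. -/
def ExtendsToDisc {U V : Type} (X : Set (Finset U)) (m : ℤ) (K : Set (Finset V))
    (f : V → U) : Prop :=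
  ∃ (W : Type) (L : Set (Finset W)) (j : V → W) (F : W → U),
    IsCombTriDisc (m + 1) L ∧ Function.Injective j ∧
    (∀ σ ∈ K, σ.image j ∈ L) ∧
    ((fun σ : Finset V => σ.image j) '' K = discBoundary (m + 1) L) ∧
    (∀ v, F (j v) = f v) ∧ IsSimplicial L X F ∧ LocInj L F

/-- `X` has the disc local injectivity property up to dimension `d`. -/
def HasDiscLII {U : Type} (X : Set (Finset U)) (d : ℤ) : Prop :=
  ∀ m : ℤ, m ≤ d → ∀ (V : Type) (K : Set (Finset V)) (f : V → U),
    IsCombTriSphere m K → IsSimplicial K X f → LocInj K f → ExtendsToDisc X m K f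

/-- The continuous map `G` realizes the simplicial map `g`. -/
def Realizes {V U : Type} (K : Set (Finset V)) (X : Set (Finset U)) (g : V → U)
    (G : C(spc K, spc X)) : Prop :=
  ∀ w : spc K, ((G w).1 : U →₀ ℝ) = Finsupp.mapDomain g w.1

/-- `X` has the sphere local injectivity property up to dimension `d`. -/
def HasSphereLII {U : Type} (X : Set (Finset U)) (d : ℤ) : Prop :=
  ∀ m : ℤ, m ≤ d → ∀ f : C(sphereSpace m, spc X),
    ∃ (V : Type) (K : Set (Finset V)) (g : V → U) (e : spc K ≃ₜ sphereSpace m)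
      (G : C(spc K, spc X)),
      IsCombTriSphere m K ∧ IsSimplicial K X g ∧ LocInj K g ∧ Realizes K X g G ∧
      (f.comp (e : C(spc K, sphereSpace m))).Homotopic G

/-- A space is `d`-connected (`d ∈ ℤ`): every map from a sphere of dimension `≤ d`
extends over the disc. -/
def DConnected (X : Type*) [TopologicalSpace X] (d : ℤ) : Prop :=
  ∀ m : ℤ, m ≤ d → ∀ f : C(sphereSpace m, X),
    ∃ F : C(discSpace (m + 1), X), ∀ x, F (sphereToDisc m x) = f x

/-- `K` is weakly Cohen–Macaulay of dimension `d`. -/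
def WCM {V : Type*} (K : Set (Finset V)) (d : ℤ) : Prop :=
  DConnected (spc K) (d - 1) ∧ ∀ σ ∈ K, DConnected (spc (link K σ)) (d - σ.card - 1)

/-- For a "bad" simplex `σ`, the subcomplex `L(σ, B)`: simplices `τ` in the link of
`σ` such that every face of `σ * τ` lying in `B` is a face of `σ`. -/
def badLink {U : Type} (Y B : Set (Finset U)) (σ : Finset U) : Set (Finset U) :=
  {τ | τ ∈ link Y σ ∧ ∀ σ' ⊆ σ ∪ τ, σ' ∈ B → σ' ⊆ σ}

/-- Bad simplex argument: let `Y` be a simplicial complex, `X ⊆ Y`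
a subcomplex, and `B` a set of simplices of `Y` with: (i) a simplex of `Y` lies in `X`
iff none of its faces lie in `B`; (ii) if `σ, σ' ∈ B` and `σ ∪ σ'` is a simplex of `Y`
then `σ ∪ σ' ∈ B`.  Suppose `f : D^k → Y` is simplicial for a combinatorial
triangulation `D` of the `k`-disc, `f(∂ D^k) ⊆ X`, and `σ` is a simplex of `D` of
maximal dimension with `f(σ) ∈ B`.  Then `σ` does not lie in `∂ D^k`, and for every
simplex `τ` of `Link_{D^k}(σ)`, the image `f(τ)` lies in `L(f(σ), B)`. -/
theorem stmt18 {W U : Type} (Y Xc B : Set (Finset U))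
    (hY : IsComplex Y) (hXY : Xc ⊆ Y) (hBY : B ⊆ Y)
    (hi : ∀ σ ∈ Y, (σ ∈ Xc ↔ ∀ τ, τ ⊆ σ → τ ∉ B))
    (hii : ∀ σ ∈ B, ∀ σ' ∈ B, σ ∪ σ' ∈ Y → σ ∪ σ' ∈ B)
    (k : ℤ) (D : Set (Finset W)) (hD : IsCombTriDisc k D)
    (f : W → U) (hf : IsSimplicial D Y f)
    (hbd : ∀ τ ∈ discBoundary k D, τ.image f ∈ Xc)
    (σ : Finset W) (hσ : σ ∈ D) (hσB : σ.image f ∈ B)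
    (hmax : ∀ τ ∈ D, τ.image f ∈ B → τ.card ≤ σ.card) :
    σ ∉ discBoundary k D ∧
      ∀ τ ∈ link D σ, τ.image f ∈ badLink Y B (σ.image f) := by
  classical
  have hσne : σ ≠ ∅ := (hD.1 σ hσ).1
  have hσfY : σ.image f ∈ Y := hf σ hσ
  constructor
  · intro h
    have hX := hbd σ h
    exact ((hi _ hσfY).1 hX) (σ.image f) subset_rfl hσB
  · intro τ hτ
    obtain ⟨hτD, hdisj, hστD⟩ := hτ
    -- main combinatorial lemma
    have main : ∀ T : Finset U,
        σ.image f ∪ (τ.filter (fun w => f w ∈ T)).image f ∈ B →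
        ∀ w ∈ τ, f w ∉ T := by
      intro T hTB w hw hwT
      set ρ := σ ∪ τ.filter (fun w => f w ∈ T) with hρ
      have hρsub : ρ ⊆ σ ∪ τ :=
        Finset.union_subset_union_right (Finset.filter_subset _ _)
      have hρne : ρ ≠ ∅ := by
        intro h
        exact hσne (Finset.subset_empty.1 (h ▸ Finset.subset_union_left))
      have hρD : ρ ∈ D := (hD.1 _ hστD).2 ρ hρsub hρne
      have hρimg : ρ.image f ∈ B := by
        rw [hρ, Finset.image_union]; exact hTB
      have hcard := hmax ρ hρD hρimg
      have hρeq : ρ = σ :=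
        (Finset.eq_of_subset_of_card_le Finset.subset_union_left hcard).symm
      have : w ∈ ρ := Finset.mem_union_right _ (Finset.mem_filter.2 ⟨hw, hwT⟩)
      rw [hρeq] at this
      exact (Finset.disjoint_left.1 hdisj) this hw
    have hdisjf : Disjoint (σ.image f) (τ.image f) := by
      have h1 : σ.image f ∪ (τ.filter (fun w => f w ∈ σ.image f)).image f ∈ B := by
        have : (τ.filter (fun w => f w ∈ σ.image f)).image f ⊆ σ.image f := by
          intro u hu
          obtain ⟨w, hw, rfl⟩ := Finset.mem_image.1 hu
          exact (Finset.mem_filter.1 hw).2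
        rwa [Finset.union_eq_left.2 this]
      have := main _ h1
      rw [Finset.disjoint_right]
      intro u hu
      obtain ⟨w, hw, rfl⟩ := Finset.mem_image.1 hu
      exact this w hw
    have hunionY : σ.image f ∪ τ.image f ∈ Y := by
      rw [← Finset.image_union]; exact hf _ hστD
    refine ⟨⟨hf τ hτD, hdisjf, hunionY⟩, ?_⟩
    intro σ' hσ'sub hσ'B
    -- show σ' ⊆ σ.image f
    have hσ'ne : σ' ≠ ∅ := (hBY hσ'B |> hY σ' |>.1)
    have hunB : σ.image f ∪ σ' ∈ B := by
      apply hii _ hσB _ hσ'B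
      apply (hY _ hunionY).2
      · exact Finset.union_subset Finset.subset_union_left hσ'sub
      · intro h
        exact hσne (Finset.image_eq_empty.1
          (Finset.subset_empty.1 (h ▸ (Finset.subset_union_left :
            σ.image f ⊆ σ.image f ∪ σ'))))
    have heq : σ.image f ∪ (τ.filter (fun w => f w ∈ σ')).image f
        = σ.image f ∪ σ' := by
      apply Finset.Subset.antisymm
      · apply Finset.union_subset Finset.subset_union_left
        intro u hu
        obtain ⟨w, hw, rfl⟩ := Finset.mem_image.1 hu
        exact Finset.mem_union_right _ (Finset.mem_filter.1 hw).2
      · apply Finset.union_subset Finset.subset_union_left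
        intro u hu
        rcases Finset.mem_union.1 (hσ'sub hu) with h | h
        · exact Finset.mem_union_left _ h
        · obtain ⟨w, hw, rfl⟩ := Finset.mem_image.1 h
          exact Finset.mem_union_right _
            (Finset.mem_image.2 ⟨w, Finset.mem_filter.2 ⟨hw, hu⟩, rfl⟩)
    have hnone := main σ' (heq ▸ hunB)
    intro u hu
    rcases Finset.mem_union.1 (hσ'sub hu) with h | h
    · exact h
    · obtain ⟨w, hw, rfl⟩ := Finset.mem_image.1 h
      exact absurd hu (hnone w hw)
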